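/- Let D be distributed according to the H-Multinomial distribution with parameters (s, q, λ). Fix any nonzero ε ∈ {0,1}^p and any ρ ∈ ℕ^p with ρ_j = 0 whenever ε_j = 0 and Σ_{j=1}^p ρ_j = s. Then the conditional probability P(D = ε + ρ | e(D) = ε) equals (s! / ∏_j ρ_j!) · ∏_{j : ε_j = 1} (λ_j / Σ_u λ_u ε_u)^{ρ_j}; that is, conditional on the activation pattern ε, the repetition vector r(D) = D − ε follows the Multinomial(s, θ(ε)) distribution with θ_j(ε) = λ_j ε_j / Σ_u λ_u ε_u. -/

import Mathlib

open scoped BigOperators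

/-- Activation pattern: `act d j = 1` if word `j` appears in document `d`, else `0`. -/
def act {p : ℕ} (d : Fin p → ℕ) (j : Fin p) : ℕ := if 0 < d j then 1 else 0

/-- Repetition vector: occurrences beyond the first appearance. -/
def rep {p : ℕ} (d : Fin p → ℕ) (j : Fin p) : ℕ := d j - act d j

/-- The hypergraph-induced multinomial (H-Multinomial) mass function with
parameters `(s, q, lam)`. -/
noncomputable def hPMF {p : ℕ} (s : ℕ) (q lam : Fin p → ℝ) (d : Fin p → ℕ) : ℝ :=
  if d = 0 then ∏ j, (1 - q j)
  else if (∑ j, rep d j) = s then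
    ((s.factorial : ℝ) / ∏ j, ((rep d j).factorial : ℝ)) *
      (∏ j, (q j) ^ act d j * (1 - q j) ^ (1 - act d j)) *
      (∏ j, ((lam j * (act d j : ℝ)) / (∑ u, lam u * (act d u : ℝ))) ^ rep d j)
  else 0


/-!
On the event `e(D) = ε` one has `D = ε + r(D)`, and the H-Multinomial mass of `ε + r` factors as
`P(e(D) = ε) · (s! / ∏ r_j!) · ∏_{ε_j = 1} θ_j ^ r_j` with `θ_j = λ_j / Σ_u λ_u ε_u`. By the
multinomial theorem these masses add up to `P(e(D) = ε) · (Σ_{ε_j = 1} θ_j) ^ s = P(e(D) = ε)`,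
so dividing by this probability leaves the multinomial weight.
-/

open Finset Function Nat

section ActivationPattern

variable {p : ℕ}

theorem act_zero : act (0 : Fin p → ℕ) = 0 := by
  funext j
  simp [act]

theorem act_add_rep (d : Fin p → ℕ) : act d + rep d = d := by
  funext j
  simp only [Pi.add_apply, rep, act]
  split <;> omega

theorem rep_eq_zero_of_act_eq_zero {d : Fin p → ℕ} {j : Fin p} (h : act d j = 0) :
    rep d j = 0 := by
  simp only [act, rep] at h ⊢
  split at h <;> omega

variable {ε : Fin p → ℕ}

theorem act_add (hε : ∀ j, ε j ≤ 1) {r : Fin p → ℕ} (hr : ∀ j, ε j = 0 → r j = 0) :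
    act (ε + r) = ε := by
  funext j
  have := hε j
  have := hr j
  simp only [act, Pi.add_apply]
  split <;> omega

theorem rep_add (hε : ∀ j, ε j ≤ 1) {r : Fin p → ℕ} (hr : ∀ j, ε j = 0 → r j = 0) :
    rep (ε + r) = r := by
  have h := act_add_rep (ε + r)
  rwa [act_add hε hr, add_right_inj] at h

theorem mem_piAntidiag_active_iff (hε : ∀ j, ε j ≤ 1) {r : Fin p → ℕ} {s : ℕ} :
    r ∈ piAntidiag {j | ε j = 1} s ↔ ∑ j, r j = s ∧ ∀ j, ε j = 0 → r j = 0 := by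
  have hsupp : (∀ j, r j ≠ 0 → j ∈ ({j | ε j = 1} : Finset (Fin p))) ↔
      ∀ j, ε j = 0 → r j = 0 := by
    simp only [mem_filter_univ]
    exact forall_congr' fun j => by have := hε j; omega
  rw [mem_piAntidiag, hsupp]
  refine and_congr_left fun hr => ?_
  rw [sum_filter_of_ne fun j _ hj => by have := hε j; have := hr j; omega]

end ActivationPattern

theorem Nat.cast_multinomial {α K : Type*} [Field K] [CharZero K] (s : Finset α) (f : α → ℕ) :
    (multinomial s f : K) = (∑ i ∈ s, f i)! / ∏ i ∈ s, ((f i)! : K) := by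
  rw [multinomial, Nat.cast_div (prod_factorial_dvd_factorial_sum s f)
    (mod_cast (prod_factorial_pos s f).ne'), Nat.cast_prod]

section HMultinomial

variable {p : ℕ}

noncomputable def activationProb (q : Fin p → ℝ) (ε : Fin p → ℕ) : ℝ :=
  ∏ j, q j ^ ε j * (1 - q j) ^ (1 - ε j)

theorem activationProb_pos {q : Fin p → ℝ} (hq : ∀ j, 0 < q j ∧ q j < 1) (ε : Fin p → ℕ) :
    0 < activationProb q ε :=
  prod_pos fun j _ => mul_pos (pow_pos (hq j).1 _) (pow_pos (sub_pos.2 (hq j).2) _)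

variable {ε : Fin p → ℕ}

theorem sum_mul_active_eq (hε : ∀ j, ε j ≤ 1) (lam : Fin p → ℝ) :
    ∑ u, lam u * (ε u : ℝ) = ∑ j ∈ {j | ε j = 1}, lam j := by
  rw [sum_filter]
  refine sum_congr rfl fun j _ => ?_
  rcases Nat.le_one_iff_eq_zero_or_eq_one.1 (hε j) with h | h <;> simp [h]

theorem prod_pow_active_eq (hε : ∀ j, ε j ≤ 1) {r : Fin p → ℕ} (hr : ∀ j, ε j = 0 → r j = 0)
    (lam : Fin p → ℝ) (T : ℝ) :
    ∏ j, (lam j * (ε j : ℝ) / T) ^ r j = ∏ j ∈ {j | ε j = 1}, (lam j / T) ^ r j := by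
  have hactive : ∀ j ∈ univ, (lam j * (ε j : ℝ) / T) ^ r j ≠ 1 → ε j = 1 := fun j _ hj => by
    by_contra h
    rw [hr j (by have := hε j; omega), pow_zero] at hj
    exact hj rfl
  rw [← prod_filter_of_ne hactive]
  refine prod_congr rfl fun j hj => ?_
  rw [(mem_filter_univ j).1 hj, Nat.cast_one, mul_one]

theorem hPMF_add (s : ℕ) (q lam : Fin p → ℝ) (hε : ∀ j, ε j ≤ 1) (hεne : ε ≠ 0)
    {r : Fin p → ℕ} (hr : ∀ j, ε j = 0 → r j = 0) (hrs : ∑ j, r j = s) :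
    hPMF s q lam (ε + r) = activationProb q ε * ((s ! / ∏ j, ((r j)! : ℝ)) *
      ∏ j ∈ {j | ε j = 1}, (lam j / ∑ u, lam u * (ε u : ℝ)) ^ r j) := by
  have hne : ε + r ≠ 0 := fun h => hεne <| by rw [← act_add hε hr, h, act_zero]
  rw [hPMF, if_neg hne, rep_add hε hr, act_add hε hr, if_pos hrs, prod_pow_active_eq hε hr,
    activationProb]
  ring

theorem support_hPMF_act_subset (s : ℕ) (q lam : Fin p → ℝ) (hε : ∀ j, ε j ≤ 1) (hεne : ε ≠ 0) :
    support (fun d => if act d = ε then hPMF s q lam d else 0) ⊆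
      (piAntidiag {j | ε j = 1} s).image (ε + ·) := by
  intro d hd
  have hact : act d = ε := by by_contra h; simp [h] at hd
  have hd0 : d ≠ 0 := by rintro rfl; exact hεne (act_zero ▸ hact).symm
  have hsum : ∑ j, rep d j = s := by by_contra h; simp [hact, hPMF, hd0, h] at hd
  refine mem_coe.2 <| mem_image.2 ⟨rep d, (mem_piAntidiag_active_iff hε).2 ⟨hsum, ?_⟩, ?_⟩
  · exact fun j hj => rep_eq_zero_of_act_eq_zero (hact ▸ hj)
  · rw [← hact, act_add_rep]

theorem sum_active_div_eq_one {lam : Fin p → ℝ} (hlam : ∀ j, 0 < lam j) (hε : ∀ j, ε j ≤ 1)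
    (hεne : ε ≠ 0) : ∑ j ∈ {j | ε j = 1}, lam j / ∑ u, lam u * (ε u : ℝ) = 1 := by
  obtain ⟨j, hj⟩ := Function.ne_iff.1 hεne
  have hjS : j ∈ ({j | ε j = 1} : Finset (Fin p)) :=
    (mem_filter_univ j).2 (by have := hε j; simp only [Pi.zero_apply] at hj; omega)
  rw [← sum_div, sum_mul_active_eq hε, div_self (sum_pos (fun j _ => hlam j) ⟨j, hjS⟩).ne']

theorem cast_multinomial_active (hε : ∀ j, ε j ≤ 1) {r : Fin p → ℕ}
    (hr : ∀ j, ε j = 0 → r j = 0) {s : ℕ} (hrs : ∑ j, r j = s) :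
    (multinomial {j | ε j = 1} r : ℝ) = s ! / ∏ j, ((r j)! : ℝ) := by
  have hr' : ∀ j ∈ univ \ ({j | ε j = 1} : Finset (Fin p)), r j = 0 := fun j hj =>
    hr j (by have := hε j; simp only [mem_sdiff, mem_filter_univ] at hj; omega)
  rw [multinomial_congr_of_sdiff (subset_univ _) hr' fun _ _ => rfl, Nat.cast_multinomial, hrs]

theorem tsum_hPMF_act_eq (s : ℕ) (q : Fin p → ℝ) {lam : Fin p → ℝ} (hlam : ∀ j, 0 < lam j)
    (hε : ∀ j, ε j ≤ 1) (hεne : ε ≠ 0) :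
    ∑' d : Fin p → ℕ, (if act d = ε then hPMF s q lam d else 0) = activationProb q ε := by
  set S : Finset (Fin p) := {j | ε j = 1}
  set θ : Fin p → ℝ := fun j => lam j / ∑ u, lam u * (ε u : ℝ)
  calc _ = ∑ r ∈ piAntidiag S s, hPMF s q lam (ε + r) := by
        rw [tsum_eq_sum' (support_hPMF_act_subset s q lam hε hεne),
          sum_image fun _ _ _ _ => add_left_cancel]
        exact sum_congr rfl fun r hr =>
          if_pos (act_add hε ((mem_piAntidiag_active_iff hε).1 hr).2)
    _ = activationProb q ε * ∑ r ∈ piAntidiag S s, multinomial S r * ∏ j ∈ S, θ j ^ r j := by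
        rw [mul_sum]
        refine sum_congr rfl fun r hr => ?_
        obtain ⟨hrs, hr⟩ := (mem_piAntidiag_active_iff hε).1 hr
        rw [hPMF_add s q lam hε hεne hr hrs, cast_multinomial_active hε hr hrs]
    _ = activationProb q ε := by
        rw [← sum_pow_eq_sum_piAntidiag, sum_active_div_eq_one hlam hε hεne, one_pow, mul_one]

end HMultinomial

theorem hPMF_conditional_multinomial_general (p : ℕ) (s : ℕ) (q lam : Fin p → ℝ)
    (hq : ∀ j, 0 < q j ∧ q j < 1) (hlam : ∀ j, 0 < lam j)
    (ε : Fin p → ℕ) (hε : ∀ j, ε j ≤ 1) (hεne : ε ≠ 0)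
    (ρ : Fin p → ℕ) (hρ : ∀ j, ε j = 0 → ρ j = 0) (hρs : ∑ j, ρ j = s) :
    hPMF s q lam (ε + ρ) / (∑' d : Fin p → ℕ, (if act d = ε then hPMF s q lam d else 0))
      = ((s.factorial : ℝ) / ∏ j, ((ρ j).factorial : ℝ)) *
          ∏ j ∈ Finset.univ.filter (fun j => ε j = 1),
            (lam j / ∑ u, lam u * (ε u : ℝ)) ^ ρ j := by
  rw [hPMF_add s q lam hε hεne hρ hρs, tsum_hPMF_act_eq s q hlam hε hεne,
    mul_div_cancel_left₀ _ (activationProb_pos hq ε).ne']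

/-- conditional on the activation pattern `ε ≠ 0`, the repetition vector
follows the `Multinomial(s, θ(ε))` law with `θ_j(ε) = λ_j ε_j / Σ_u λ_u ε_u`; i.e. the
conditional probability of `D = ε + ρ` given `e(D) = ε` equals
`(s! / ∏_j ρ_j!) ∏_{j : ε_j = 1} (λ_j / Σ_u λ_u ε_u)^{ρ_j}`. -/
theorem hPMF_conditional_multinomial (p : ℕ) (hp : 1 ≤ p) (s : ℕ) (q lam : Fin p → ℝ)
    (hq : ∀ j, 0 < q j ∧ q j < 1) (hlam : ∀ j, 0 < lam j)
    (hlamsum : ∑ j, lam j = (p : ℝ))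
    (ε : Fin p → ℕ) (hε : ∀ j, ε j ≤ 1) (hεne : ε ≠ 0)
    (ρ : Fin p → ℕ) (hρ : ∀ j, ε j = 0 → ρ j = 0) (hρs : ∑ j, ρ j = s) :
    hPMF s q lam (ε + ρ) / (∑' d : Fin p → ℕ, (if act d = ε then hPMF s q lam d else 0))
      = ((s.factorial : ℝ) / ∏ j, ((ρ j).factorial : ℝ)) *
          ∏ j ∈ Finset.univ.filter (fun j => ε j = 1),
            (lam j / ∑ u, lam u * (ε u : ℝ)) ^ ρ j :=
  hPMF_conditional_multinomial_general p s q lam hq hlam ε hε hεne ρ hρ hρs
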